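/- arXiv:1104.2281 — 2 statements merged into one kernel-verified Lean document; each statement's English description precedes it below -/
import Mathlib

section
/- Let m ≥ 1, let A be an m×m complex matrix and let λ₁,…,λ_m be pairwise distinct complex numbers such that the characteristic polynomial of A equals ∏_{j=1}^m (X − λ_j). Fix j and let ρ > 0 satisfy ρ < |λ_h − λ_j| for all h ≠ j. Then the matrix z·I − A is invertible for every z on the circle |z − λ_j| = ρ, and (1/(2πi)) ∮_{|z−λ_j|=ρ} (z·I − A)^{-1} dz = ∏_{h≠j} (λ_j − λ_h)^{-1}·(A − λ_h·I). -/
open Polynomial Matrix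

attribute [local instance] Matrix.normedAddCommGroup Matrix.normedSpace

/-! With `P i = Lᵢ(A)` for the Lagrange basis polynomials `Lᵢ` of the eigenvalues, `∑ P i = 1`, and
Cayley–Hamilton gives `A * P i = λᵢ • P i` because `(X - λᵢ) Lᵢ` is a multiple of the
characteristic polynomial. Hence the resolvent has the partial fraction expansion
`(z - A)⁻¹ = ∑ (z - λᵢ)⁻¹ • P i`, and integrating term by term over the circle only the pole at
`λⱼ` contributes, with residue `P j`. -/

namespace Lagrange

theorem nodal_dvd_X_sub_C_mul_basis {F ι : Type*} [Field F] [DecidableEq ι] {s : Finset ι}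
    {v : ι → F} {i : ι} (hi : i ∈ s) : nodal s v ∣ (X - C (v i)) * Lagrange.basis s v i := by
  rw [basis_eq_prod_sub_inv_mul_nodal_div hi, mul_left_comm,
    EuclideanDomain.mul_div_cancel' (X_sub_C_ne_zero _) (X_sub_C_dvd_nodal v hi)]
  exact dvd_mul_left _ _

end Lagrange

namespace Matrix

variable {K n ι : Type*} [Field K] [Fintype n] [DecidableEq n] [Fintype ι]

theorem det_smul_one_sub {R : Type*} [CommRing R] (A : Matrix n n R) (z : R) :
    (z • 1 - A).det = A.charpoly.eval z := by
  rw [eval_charpoly, scalar_apply, smul_one_eq_diagonal]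

theorem isUnit_smul_one_sub_of_charpoly_eq_prod {A : Matrix n n K} {lam : ι → K}
    (hchar : A.charpoly = ∏ i, (X - C (lam i))) {z : K} (hz : ∀ i, z ≠ lam i) :
    IsUnit (z • 1 - A) := by
  rw [isUnit_iff_isUnit_det, det_smul_one_sub, hchar, eval_prod, isUnit_iff_ne_zero]
  exact Finset.prod_ne_zero_iff.2 fun i _ ↦ by simpa [sub_eq_zero] using hz i

variable [DecidableEq ι]

/-- The spectral projection of `A` onto the eigenspace of `lam i`. -/
noncomputable def lagrangeProjection (A : Matrix n n K) (lam : ι → K) (i : ι) : Matrix n n K :=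
  aeval A (Lagrange.basis Finset.univ lam i)

theorem sum_lagrangeProjection [Nonempty ι] (A : Matrix n n K) {lam : ι → K}
    (hlam : Function.Injective lam) : ∑ i, lagrangeProjection A lam i = 1 := by
  simp only [lagrangeProjection]
  rw [← map_sum, Lagrange.sum_basis hlam.injOn Finset.univ_nonempty, map_one]

theorem mul_lagrangeProjection_of_charpoly_eq_prod {A : Matrix n n K} {lam : ι → K}
    (hchar : A.charpoly = ∏ i, (X - C (lam i))) (i : ι) :
    A * lagrangeProjection A lam i = lam i • lagrangeProjection A lam i := by
  obtain ⟨q, hq⟩ := Lagrange.nodal_dvd_X_sub_C_mul_basis (v := lam) (Finset.mem_univ i)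
  rw [Lagrange.nodal_eq, ← hchar] at hq
  have hA := congrArg (aeval A) hq
  rwa [map_mul, map_mul, aeval_self_charpoly, zero_mul, map_sub, aeval_X, aeval_C,
    Algebra.algebraMap_eq_smul_one, sub_mul, sub_eq_zero, smul_mul, one_mul] at hA

theorem smul_one_sub_mul_lagrangeProjection {A : Matrix n n K} {lam : ι → K}
    (hchar : A.charpoly = ∏ i, (X - C (lam i))) (z : K) (i : ι) :
    (z • 1 - A) * lagrangeProjection A lam i = (z - lam i) • lagrangeProjection A lam i := by
  rw [sub_mul, smul_mul, one_mul, mul_lagrangeProjection_of_charpoly_eq_prod hchar, sub_smul]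

theorem inv_smul_one_sub_eq_sum_lagrangeProjection [Nonempty ι] {A : Matrix n n K}
    {lam : ι → K} (hlam : Function.Injective lam) (hchar : A.charpoly = ∏ i, (X - C (lam i)))
    {z : K} (hz : ∀ i, z ≠ lam i) :
    (z • 1 - A)⁻¹ = ∑ i, (z - lam i)⁻¹ • lagrangeProjection A lam i := by
  refine inv_eq_right_inv ?_
  simp_rw [Finset.mul_sum, Matrix.mul_smul, smul_one_sub_mul_lagrangeProjection hchar, smul_smul,
    inv_mul_cancel₀ (sub_ne_zero.2 (hz _)), one_smul]
  exact sum_lagrangeProjection A hlam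

end Matrix

open Metric in
theorem ne_of_mem_sphere_of_forall_notMem_closedBall {α ι : Type*} [PseudoMetricSpace α]
    {lam : ι → α} {c z : α} {R : ℝ} {j : ι} (hj : lam j ∈ ball c R)
    (hother : ∀ i ≠ j, lam i ∉ closedBall c R) (hz : z ∈ sphere c R) (i : ι) : z ≠ lam i := by
  rintro rfl
  rcases eq_or_ne i j with rfl | hij
  · exact (mem_ball.1 hj).ne (mem_sphere.1 hz)
  · exact hother i hij (sphere_subset_closedBall hz)

namespace circleIntegral

open Metric

theorem integral_sub_inv_of_notMem_closedBall {c w : ℂ} {R : ℝ} (hR : 0 ≤ R)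
    (hw : w ∉ closedBall c R) : ∮ z in C(c, R), (z - w)⁻¹ = 0 := by
  refine DiffContOnCl.circleIntegral_eq_zero hR (DifferentiableOn.diffContOnCl_ball (U := {w}ᶜ)
    ?_ (Set.subset_compl_singleton_iff.2 hw))
  exact (differentiable_id.sub_const w).differentiableOn.inv fun z hz ↦ sub_ne_zero.2 hz

end circleIntegral

namespace Matrix

open Metric

variable {n ι : Type*} [Fintype n] [DecidableEq n] [Fintype ι] [DecidableEq ι]

theorem two_pi_I_inv_smul_circleIntegral_inv_smul_one_sub {A : Matrix n n ℂ} {lam : ι → ℂ}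
    (hlam : Function.Injective lam) (hchar : A.charpoly = ∏ i, (X - C (lam i))) {c : ℂ} {R : ℝ}
    {j : ι} (hj : lam j ∈ ball c R) (hother : ∀ i ≠ j, lam i ∉ closedBall c R) :
    (2 * (Real.pi : ℂ) * Complex.I)⁻¹ • ∮ z in C(c, R), (z • (1 : Matrix n n ℂ) - A)⁻¹ =
      lagrangeProjection A lam j := by
  have : Nonempty ι := ⟨j⟩
  have hR : 0 < R := nonempty_ball.1 ⟨_, hj⟩
  have hsphere := fun z (hz : z ∈ sphere c R) ↦
    ne_of_mem_sphere_of_forall_notMem_closedBall hj hother hz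
  have hintegrable : ∀ i ∈ Finset.univ, CircleIntegrable
      (fun z ↦ (z - lam i)⁻¹ • lagrangeProjection A lam i) c R := fun i _ ↦
    (((continuousOn_id.sub continuousOn_const).inv₀ fun z hz ↦
      sub_ne_zero.2 (hsphere z hz i)).smul continuousOn_const).circleIntegrable hR.le
  rw [circleIntegral.integral_congr hR.le fun z hz ↦
      inv_smul_one_sub_eq_sum_lagrangeProjection hlam hchar (hsphere z hz),
    circleIntegral.integral_fun_sum hintegrable]
  simp_rw [circleIntegral.integral_smul_const]
  rw [Finset.sum_eq_single j, circleIntegral.integral_sub_inv_of_mem_ball hj, smul_smul,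
    inv_mul_cancel₀ Complex.two_pi_I_ne_zero, one_smul]
  · intro i _ hij
    rw [circleIntegral.integral_sub_inv_of_notMem_closedBall hR.le (hother i hij), zero_smul]
  · simp

end Matrix

theorem stmt_2_general (m : ℕ) (A : Matrix (Fin m) (Fin m) ℂ) (lam : Fin m → ℂ)
    (hdist : Function.Injective lam)
    (hchar : A.charpoly = ∏ j : Fin m, (X - C (lam j)))
    (j : Fin m) (ρ : ℝ) (hρ : 0 < ρ)
    (hsep : ∀ h : Fin m, h ≠ j → ρ < ‖lam h - lam j‖) :
    (∀ z : ℂ, ‖z - lam j‖ = ρ →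
        IsUnit (z • (1 : Matrix (Fin m) (Fin m) ℂ) - A)) ∧
    (2 * (Real.pi : ℂ) * Complex.I)⁻¹ •
        (∮ z in C(lam j, ρ), (z • (1 : Matrix (Fin m) (Fin m) ℂ) - A)⁻¹) =
      Polynomial.aeval A
        (∏ h ∈ Finset.univ.erase j, (C ((lam j - lam h)⁻¹) * (X - C (lam h)))) := by
  have hj : lam j ∈ Metric.ball (lam j) ρ := Metric.mem_ball_self hρ
  have hother : ∀ h ≠ j, lam h ∉ Metric.closedBall (lam j) ρ := fun h hh ↦ by
    simpa [dist_eq_norm] using hsep h hh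
  refine ⟨fun z hz ↦ isUnit_smul_one_sub_of_charpoly_eq_prod hchar
    (ne_of_mem_sphere_of_forall_notMem_closedBall hj hother (mem_sphere_iff_norm.2 hz)), ?_⟩
  rw [two_pi_I_inv_smul_circleIntegral_inv_smul_one_sub hdist hchar hj hother]
  simp only [lagrangeProjection, Lagrange.basis, Lagrange.basisDivisor]

/-- The Riesz projection of a matrix with simple spectrum, given by the contour
integral of the resolvent around a single eigenvalue, equals the Lagrange
spectral projection. -/
theorem stmt_2 (m : ℕ) (hm : 1 ≤ m) (A : Matrix (Fin m) (Fin m) ℂ) (lam : Fin m → ℂ)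
    (hdist : Function.Injective lam)
    (hchar : A.charpoly = ∏ j : Fin m, (X - C (lam j)))
    (j : Fin m) (ρ : ℝ) (hρ : 0 < ρ)
    (hsep : ∀ h : Fin m, h ≠ j → ρ < ‖lam h - lam j‖) :
    (∀ z : ℂ, ‖z - lam j‖ = ρ →
        IsUnit (z • (1 : Matrix (Fin m) (Fin m) ℂ) - A)) ∧
    (2 * (Real.pi : ℂ) * Complex.I)⁻¹ •
        (∮ z in C(lam j, ρ), (z • (1 : Matrix (Fin m) (Fin m) ℂ) - A)⁻¹) =
      Polynomial.aeval A
        (∏ h ∈ Finset.univ.erase j, (C ((lam j - lam h)⁻¹) * (X - C (lam h)))) :=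
  stmt_2_general m A lam hdist hchar j ρ hρ hsep
end

section
/- Let H be a complex Hilbert space, T > 0, c > 0 and M > 0. Let S, K : [0,T] → B(H) be families of bounded linear operators such that t ↦ S(t) is differentiable in the operator norm with derivative S'(t), and for all t ∈ [0,T]: S(t) is self-adjoint; ⟨S(t)u, u⟩ ≥ c‖u‖² for all u ∈ H; ‖S(t)‖ ≤ M; ‖S'(t)‖ ≤ M; and ‖S(t)K(t) + K(t)*S(t)‖ ≤ M, where K(t)* is the Hilbert adjoint. Let f : [0,T] → H be continuous and let u : [0,T] → H be continuously differentiable with u'(t) = K(t)u(t) + f(t) for all t ∈ [0,T]. Then, with C := 3M, for all t ∈ [0,T]: ‖u(t)‖² ≤ c^{-1} ( ⟨S(0)u(0), u(0)⟩ + C ∫₀ᵗ ‖f(s)‖² ds ) · exp(C t / c). -/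
/-!
Along a solution, the energy `E(t) = Re ⟪S(t) u(t), u(t)⟫` has derivative
`Re ⟪S' u, u⟫ + Re ⟪(S K + K* S) u, u⟫ + 2 Re ⟪S u, f⟫ ≤ 3M‖u‖² + M‖f‖²`, and coercivity
`c‖u‖² ≤ E` turns this into the differential inequality `E' ≤ (3M/c) E + 3M‖f‖²`.
Multiplying by the integrating factor `exp(-3Mt/c)` and integrating gives
`E(t) ≤ (E(0) + 3M ∫₀ᵗ ‖f‖²) exp(3Mt/c)`, and coercivity at time `t` gives the bound on `‖u(t)‖²`.
-/

open Set ContinuousLinearMap RCLike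

theorem le_add_integral_mul_exp_of_deriv_right_le {E E' g : ℝ → ℝ} {a b r : ℝ} (hr : 0 ≤ r)
    (hab : a ≤ b) (hE : ContinuousOn E (Icc a b))
    (hE' : ∀ x ∈ Ioo a b, HasDerivWithinAt E (E' x) (Ioi x) x)
    (hg : MeasureTheory.IntegrableOn g (Icc a b)) (hg_nonneg : ∀ x ∈ Ioo a b, 0 ≤ g x)
    (hbound : ∀ x ∈ Ioo a b, E' x ≤ r * E x + g x) :
    E b ≤ (E a + ∫ x in a..b, g x) * Real.exp (r * (b - a)) := by
  set w : ℝ → ℝ := fun x => Real.exp (-(r * (x - a)))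
  have hw : ∀ x, HasDerivAt w (-r * w x) x := fun x => by
    simpa [w, mul_comm] using (((hasDerivAt_id x).sub_const a).const_mul r).neg.exp
  have hwE_deriv : ∀ x ∈ Ioo a b,
      HasDerivWithinAt (fun x => w x * E x) (w x * (E' x - r * E x)) (Ioi x) x := fun x hx =>
    ((hw x).hasDerivWithinAt.mul (hE' x hx)).congr_deriv (by ring)
  have hwE_deriv_le : ∀ x ∈ Ioo a b, w x * (E' x - r * E x) ≤ g x := fun x hx => by
    have hw_le_one : w x ≤ 1 := Real.exp_le_one_iff.mpr (by nlinarith [hx.1])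
    calc w x * (E' x - r * E x) ≤ w x * g x := by
          gcongr
          linarith [hbound x hx]
      _ ≤ g x := mul_le_of_le_one_left (hg_nonneg x hx) hw_le_one
  have hwE_cont : ContinuousOn (fun x => w x * E x) (Icc a b) :=
    (continuous_iff_continuousAt.mpr fun x => (hw x).continuousAt).continuousOn.mul hE
  have hintegrated := intervalIntegral.sub_le_integral_of_hasDeriv_right_of_le hab hwE_cont
    hwE_deriv hg hwE_deriv_le
  have hwa : w a = 1 := by simp [w]
  have hwb : w b * Real.exp (r * (b - a)) = 1 := by
    rw [← Real.exp_add]; simp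
  calc E b = (w b * E b) * Real.exp (r * (b - a)) := by linear_combination E b * hwb.symm
    _ ≤ (E a + ∫ x in a..b, g x) * Real.exp (r * (b - a)) := by
      gcongr
      rw [hwa, one_mul] at hintegrated
      linarith

section Energy

variable {𝕜 E : Type*} [RCLike 𝕜] [NormedAddCommGroup E] [InnerProductSpace 𝕜 E]

local notation "⟪" x ", " y "⟫" => inner 𝕜 x y

theorem HasDerivWithinAt.re_inner_apply_self [NormedSpace ℝ E] [IsScalarTower ℝ 𝕜 E]
    {S : ℝ → E →L[𝕜] E} {S' : E →L[𝕜] E} {u : ℝ → E} {u' : E} {s : Set ℝ} {t : ℝ}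
    (hS : HasDerivWithinAt S S' s t) (hu : HasDerivWithinAt u u' s t) :
    HasDerivWithinAt (fun x => re ⟪S x (u x), u x⟫)
      (re (⟪S t (u t), u'⟫ + ⟪S' (u t) + S t u', u t⟫)) s t := by
  have hSR : HasDerivWithinAt (fun x => (S x).restrictScalars ℝ) (S'.restrictScalars ℝ) s t :=
    (restrictScalarsL 𝕜 E E ℝ ℝ).hasFDerivAt.comp_hasDerivWithinAt t hS
  exact reCLM.hasFDerivAt.comp_hasDerivWithinAt t ((hSR.clm_apply hu).inner 𝕜 hu)

theorem re_inner_apply_le (A : E →L[𝕜] E) (v w : E) : re ⟪A v, w⟫ ≤ ‖A‖ * ‖v‖ * ‖w‖ :=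
  (re_inner_le_norm _ _).trans (by gcongr; exact A.le_opNorm v)

variable [CompleteSpace E]

theorem re_energy_rate_eq {S S' K : E →L[𝕜] E} (hS : IsSelfAdjoint S) (v w : E) :
    re (⟪S v, K v + w⟫ + ⟪S' v + S (K v + w), v⟫) =
      re ⟪(S ∘L K + adjoint K ∘L S) v, v⟫ + re ⟪S' v, v⟫ + 2 * re ⟪S v, w⟫ := by
  have hSw : re ⟪S w, v⟫ = re ⟪S v, w⟫ := by
    rw [← inner_conj_symm, conj_re, ← adjoint_inner_right, hS.adjoint_eq]
  simp only [inner_add_left, inner_add_right, map_add, add_apply, comp_apply, adjoint_inner_left]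
  linarith

theorem re_energy_rate_le {S S' K : E →L[𝕜] E} (hS : IsSelfAdjoint S) {M : ℝ} (hSM : ‖S‖ ≤ M)
    (hS'M : ‖S'‖ ≤ M) (hSK : ‖S ∘L K + adjoint K ∘L S‖ ≤ M) (v w : E) :
    re (⟪S v, K v + w⟫ + ⟪S' v + S (K v + w), v⟫) ≤ 3 * M * ‖v‖ ^ 2 + M * ‖w‖ ^ 2 := by
  rw [re_energy_rate_eq hS]
  have h₁ := re_inner_apply_le (S ∘L K + adjoint K ∘L S) v v
  have h₂ := re_inner_apply_le S' v v
  have h₃ := re_inner_apply_le S v w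
  nlinarith [norm_nonneg S, sq_nonneg (‖v‖ - ‖w‖), norm_nonneg v, norm_nonneg w]

end Energy

theorem stmt_6_general {H : Type*} [NormedAddCommGroup H] [InnerProductSpace ℂ H]
    [CompleteSpace H]
    (T c M : ℝ) (hc : 0 < c) (hM : 0 < M)
    (S K S' : ℝ → (H →L[ℂ] H))
    (hSdiff : ∀ t ∈ Icc (0 : ℝ) T, HasDerivWithinAt S (S' t) (Icc (0 : ℝ) T) t)
    (hSsa : ∀ t ∈ Icc (0 : ℝ) T, IsSelfAdjoint (S t))
    (hSpos : ∀ t ∈ Icc (0 : ℝ) T, ∀ u : H, c * ‖u‖ ^ 2 ≤ (inner ℂ ((S t) u) u : ℂ).re)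
    (hSbd : ∀ t ∈ Icc (0 : ℝ) T, ‖S t‖ ≤ M)
    (hS'bd : ∀ t ∈ Icc (0 : ℝ) T, ‖S' t‖ ≤ M)
    (hsym : ∀ t ∈ Icc (0 : ℝ) T,
      ‖(S t).comp (K t) + (ContinuousLinearMap.adjoint (K t)).comp (S t)‖ ≤ M)
    (f u : ℝ → H)
    (hf : ContinuousOn f (Icc (0 : ℝ) T))
    (hu : ∀ t ∈ Icc (0 : ℝ) T, HasDerivWithinAt u ((K t) (u t) + f t) (Icc (0 : ℝ) T) t) :
    ∀ t ∈ Icc (0 : ℝ) T,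
      ‖u t‖ ^ 2 ≤
        c⁻¹ * ((inner ℂ ((S 0) (u 0)) (u 0) : ℂ).re +
            (3 * M) * ∫ s in (0 : ℝ)..t, ‖f s‖ ^ 2) *
          Real.exp ((3 * M) * t / c) := by
  intro t ht
  have hsub : Icc 0 t ⊆ Icc 0 T := Icc_subset_Icc le_rfl ht.2
  have henergy := fun x hx => (hSdiff x hx).re_inner_apply_self (hu x hx)
  have hrate : ∀ x ∈ Icc 0 T, re (inner ℂ (S x (u x)) (K x (u x) + f x) +
      inner ℂ (S' x (u x) + S x (K x (u x) + f x)) (u x)) ≤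
        3 * M / c * re (inner ℂ (S x (u x)) (u x)) + 3 * M * ‖f x‖ ^ 2 := fun x hx => by
    have hcoer : 3 * M * ‖u x‖ ^ 2 ≤ 3 * M / c * re (inner ℂ (S x (u x)) (u x)) := by
      calc 3 * M * ‖u x‖ ^ 2 = 3 * M / c * (c * ‖u x‖ ^ 2) := by field_simp
        _ ≤ 3 * M / c * re (inner ℂ (S x (u x)) (u x)) := by gcongr; exact hSpos x hx (u x)
    nlinarith [re_energy_rate_le (hSsa x hx) (hSbd x hx) (hS'bd x hx) (hsym x hx) (u x) (f x),
      sq_nonneg ‖f x‖]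
  have hgron := le_add_integral_mul_exp_of_deriv_right_le (g := fun x => 3 * M * ‖f x‖ ^ 2)
    (by positivity) ht.1
    (fun x hx => (henergy x (hsub hx)).continuousWithinAt.mono hsub)
    (fun x hx => ((henergy x (hsub (Ioo_subset_Icc_self hx))).hasDerivAt
      (Icc_mem_nhds hx.1 (hx.2.trans_le ht.2))).hasDerivWithinAt)
    (continuousOn_const.mul ((hf.mono hsub).norm.pow 2)).integrableOn_Icc
    (fun x _ => by positivity) (fun x hx => hrate x (hsub (Ioo_subset_Icc_self hx)))
  rw [intervalIntegral.integral_const_mul, sub_zero, div_mul_eq_mul_div] at hgron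
  rw [mul_assoc, le_inv_mul_iff₀ hc]
  exact (hSpos t ht (u t)).trans hgron

/-- Energy estimate for a symmetrisable evolution equation `u' = K(t)u + f` on a
complex Hilbert space: if `S(t)` is a self-adjoint positive definite symmetriser
with `‖S‖, ‖S'‖, ‖SK + K*S‖ ≤ M`, then with `C = 3M`,
`‖u(t)‖² ≤ c⁻¹(⟨S(0)u(0),u(0)⟩ + C ∫₀ᵗ ‖f‖²) e^{Ct/c}`. -/
theorem stmt_6 {H : Type*} [NormedAddCommGroup H] [InnerProductSpace ℂ H]
    [CompleteSpace H]
    (T c M : ℝ) (hT : 0 < T) (hc : 0 < c) (hM : 0 < M)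
    (S K S' : ℝ → (H →L[ℂ] H))
    (hSdiff : ∀ t ∈ Icc (0 : ℝ) T, HasDerivWithinAt S (S' t) (Icc (0 : ℝ) T) t)
    (hSsa : ∀ t ∈ Icc (0 : ℝ) T, IsSelfAdjoint (S t))
    (hSpos : ∀ t ∈ Icc (0 : ℝ) T, ∀ u : H, c * ‖u‖ ^ 2 ≤ (inner ℂ ((S t) u) u : ℂ).re)
    (hSbd : ∀ t ∈ Icc (0 : ℝ) T, ‖S t‖ ≤ M)
    (hS'bd : ∀ t ∈ Icc (0 : ℝ) T, ‖S' t‖ ≤ M)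
    (hsym : ∀ t ∈ Icc (0 : ℝ) T,
      ‖(S t).comp (K t) + (ContinuousLinearMap.adjoint (K t)).comp (S t)‖ ≤ M)
    (f u : ℝ → H)
    (hf : ContinuousOn f (Icc (0 : ℝ) T))
    (hu : ∀ t ∈ Icc (0 : ℝ) T, HasDerivWithinAt u ((K t) (u t) + f t) (Icc (0 : ℝ) T) t)
    (hu' : ContinuousOn (fun t => (K t) (u t) + f t) (Icc (0 : ℝ) T)) :
    ∀ t ∈ Icc (0 : ℝ) T,
      ‖u t‖ ^ 2 ≤
        c⁻¹ * ((inner ℂ ((S 0) (u 0)) (u 0) : ℂ).re +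
            (3 * M) * ∫ s in (0 : ℝ)..t, ‖f s‖ ^ 2) *
          Real.exp ((3 * M) * t / c) :=
  stmt_6_general T c M hc hM S K S' hSdiff hSsa hSpos hSbd hS'bd hsym f u hf hu
end
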